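/- arXiv:1708.05830 — 3 statements merged into one kernel-verified Lean document; each statement's English description precedes it below -/
import Mathlib

section
/- Let n ≥ 1 and let R = ℂ[a₁, a₂] / ⟨r_n(a₁,a₂), a₁^{n+1}, a₂^{n+1}⟩ where r_n(x,y) = x^n + x^{n−1}y + ⋯ + y^n. Then in R the product a₁^{n−1} · a₂^n is nonzero. -/
open scoped LinearAlgebra.Projectivization Simplicial

open MvPolynomial in
/-- `r_n(x, y) = xⁿ + xⁿ⁻¹y + ⋯ + yⁿ = Σ_{i=0}^{n} x^{n-i} y^{i}` in `ℂ[a₁, a₂]`. -/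
noncomputable def rPoly (n : ℕ) : MvPolynomial (Fin 2) ℂ :=
  ∑ i ∈ Finset.range (n + 1), X 0 ^ (n - i) * X 1 ^ i

open MvPolynomial in
/-- The ideal `⟨r_n(a₁,a₂), a₁^{n+1}, a₂^{n+1}⟩` of `ℂ[a₁, a₂]`. -/
noncomputable def confIdeal (n : ℕ) : Ideal (MvPolynomial (Fin 2) ℂ) :=
  Ideal.span {rPoly n, X 0 ^ (n + 1), X 1 ^ (n + 1)}

/-- `R = ℂ[a₁,a₂] / ⟨r_n(a₁,a₂), a₁^{n+1}, a₂^{n+1}⟩`, the cohomology ring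
`H*(F(ℂPⁿ,2); ℂ)` (with `deg a₁ = deg a₂ = 2`). -/
abbrev CohRing (n : ℕ) : Type _ := MvPolynomial (Fin 2) ℂ ⧸ confIdeal n

/-- The class of `a₁` in `R`. -/
noncomputable def a₁ (n : ℕ) : CohRing n := Ideal.Quotient.mk _ (MvPolynomial.X 0)

/-- The class of `a₂` in `R`. -/
noncomputable def a₂ (n : ℕ) : CohRing n := Ideal.Quotient.mk _ (MvPolynomial.X 1)

/-!
Since `(a₁ - a₂) r_n = a₁^{n+1} - a₂^{n+1}`, multiplication by `a₁ - a₂` maps the ideal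
`⟨r_n, a₁^{n+1}, a₂^{n+1}⟩` into the monomial ideal `⟨a₁^{n+1}, a₂^{n+1}⟩`. If `a₁^{n-1} a₂ⁿ`
were in the ideal, then `a₁ⁿ a₂ⁿ = (a₁ - a₂) a₁^{n-1} a₂ⁿ + a₁^{n-1} a₂^{n+1}` would lie in the
monomial ideal, which it does not: no generator divides it.
-/

open MvPolynomial

lemma rPoly_mul_sub (n : ℕ) : rPoly n * (X 0 - X 1) = X 0 ^ (n + 1) - X 1 ^ (n + 1) := by
  rw [← geom_sum₂_mul, geom_sum₂_comm, rPoly]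
  simp only [Nat.add_sub_cancel, mul_comm]

lemma confIdeal_le_colon_sub (n : ℕ) :
    confIdeal n ≤
      (Ideal.span {X 0 ^ (n + 1), X 1 ^ (n + 1)} : Ideal (MvPolynomial (Fin 2) ℂ)).colon
        {X 0 - X 1} := by
  rw [confIdeal, Ideal.span_le]
  rintro f (rfl | rfl | rfl) <;> rw [SetLike.mem_coe, Submodule.mem_colon_singleton, smul_eq_mul]
  · rw [rPoly_mul_sub]
    exact sub_mem (Ideal.subset_span (by simp)) (Ideal.subset_span (by simp))
  · exact Ideal.mul_mem_right _ _ (Ideal.subset_span (by simp))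
  · exact Ideal.mul_mem_right _ _ (Ideal.subset_span (by simp))

lemma X_pow_mul_X_pow_notMem_span_X_pow_succ {R : Type*} [CommSemiring R] [Nontrivial R]
    (n : ℕ) :
    (X 0 ^ n * X 1 ^ n : MvPolynomial (Fin 2) R) ∉ Ideal.span {X 0 ^ (n + 1), X 1 ^ (n + 1)} := by
  simp only [X_pow_eq_monomial, monomial_mul, one_mul]
  rw [← Set.image_pair (fun s => monomial s (1 : R)), mem_ideal_span_monomial_image]
  simp [Finsupp.le_def]

/-- **Theorem.** In `R = ℂ[a₁,a₂]/⟨r_n(a₁,a₂), a₁^{n+1}, a₂^{n+1}⟩` (`n ≥ 1`),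
the product `a₁^{n-1} · a₂ⁿ` is nonzero. -/
theorem a1_pow_pred_mul_a2_pow_n_ne_zero (n : ℕ) (hn : 1 ≤ n) :
    a₁ n ^ (n - 1) * a₂ n ^ n ≠ 0 := by
  intro h
  have hmem : (X 0 ^ (n - 1) * X 1 ^ n : MvPolynomial (Fin 2) ℂ) ∈ confIdeal n := by
    rw [← Ideal.Quotient.eq_zero_iff_mem]
    simpa [a₁, a₂] using h
  have hcolon := confIdeal_le_colon_sub n hmem
  rw [Submodule.mem_colon_singleton, smul_eq_mul] at hcolon
  have hsplit : (X 0 ^ n * X 1 ^ n : MvPolynomial (Fin 2) ℂ) =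
      X 0 ^ (n - 1) * X 1 ^ n * (X 0 - X 1) + X 0 ^ (n - 1) * X 1 ^ (n + 1) := by
    obtain ⟨m, rfl⟩ := Nat.exists_eq_add_of_le' hn
    simp only [Nat.add_sub_cancel]
    ring
  refine X_pow_mul_X_pow_notMem_span_X_pow_succ (R := ℂ) n ?_
  rw [hsplit]
  exact add_mem hcolon (Ideal.mul_mem_left _ _ (Ideal.subset_span (by simp)))
end

section
/- Let n ≥ 1, let R = ℂ[a₁, a₂] / ⟨r_n(a₁,a₂), a₁^{n+1}, a₂^{n+1}⟩ where r_n(x,y) = Σ_{i=0}^{n} x^{n−i}y^i, and work in the tensor product algebra R ⊗_ℂ R. Set p = (−1)^{n−1} C(2n−1, n−1) and q = (−1)^{n} C(2n−1, n), where C(·,·) denotes the binomial coefficient. Then (1 ⊗ a₁ − a₁ ⊗ 1)^{2n−1} = p · (a₁^{n−1} ⊗ a₁^{n}) + q · (a₁^{n} ⊗ a₁^{n−1}), and likewise (1 ⊗ a₂ − a₂ ⊗ 1)^{2n−1} = p · (a₂^{n−1} ⊗ a₂^{n}) + q · (a₂^{n} ⊗ a₂^{n−1}). -/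
open scoped LinearAlgebra.Projectivization Simplicial

open scoped TensorProduct in
lemma key_tensor_pow {A : Type*} [CommRing A] [Algebra ℂ A] (n : ℕ) (hn : 1 ≤ n) (a : A)
    (h : a ^ (n + 1) = 0) :
    ((1 : A) ⊗ₜ[ℂ] a - a ⊗ₜ[ℂ] (1 : A)) ^ (2 * n - 1) =
      ((-1 : ℂ) ^ (n - 1) * (Nat.choose (2 * n - 1) (n - 1) : ℂ)) •
        ((a ^ (n - 1)) ⊗ₜ[ℂ] (a ^ n)) +
      ((-1 : ℂ) ^ n * (Nat.choose (2 * n - 1) n : ℂ)) •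
        ((a ^ n) ⊗ₜ[ℂ] (a ^ (n - 1))) := by
  have hz : ∀ m, n + 1 ≤ m → a ^ m = 0 := fun m hm => by
    rw [show m = (n + 1) + (m - (n + 1)) by omega, pow_add, h, zero_mul]
  rw [sub_pow]
  rw [← Finset.sum_subset (s₁ := ({n - 1, n} : Finset ℕ))
      (by intro x hx; simp at hx; simp only [Finset.mem_range]; omega)
      (by
        intro x hx hxs
        simp only [Finset.mem_range] at hx
        simp only [Finset.mem_insert, Finset.mem_singleton] at hxs
        push_neg at hxs
        rcases lt_or_ge x (n - 1) with hlt | hge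
        · have : a ^ (2 * n - 1 - x) = 0 := hz _ (by omega)
          simp [Algebra.TensorProduct.tmul_pow, this]
        · have : a ^ x = 0 := hz _ (by omega)
          simp [Algebra.TensorProduct.tmul_pow, this])]
  rw [Finset.sum_pair (by omega : n - 1 ≠ n)]
  simp only [Algebra.TensorProduct.tmul_pow, one_pow,
    Algebra.TensorProduct.tmul_mul_tmul, one_mul, mul_one]
  have e1 : 2 * n - 1 - (n - 1) = n := by omega
  have e2 : 2 * n - 1 - n = n - 1 := by omega
  rw [e1, e2]
  have hc : Nat.choose (2 * n - 1) (n - 1) = Nat.choose (2 * n - 1) n := by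
    rw [show n - 1 = (2 * n - 1) - n by omega, Nat.choose_symm (by omega)]
  have s1 : (-1 : A ⊗[ℂ] A) ^ (n - 1 + (2 * n - 1)) = (-1) ^ n := by
    rw [show n - 1 + (2 * n - 1) = n + 2 * (n - 1) by omega, pow_add, pow_mul,
      neg_one_sq, one_pow, mul_one]
  have s2 : (-1 : A ⊗[ℂ] A) ^ (n + (2 * n - 1)) = (-1) ^ (n - 1) := by
    rw [show n + (2 * n - 1) = (n - 1) + 2 * n by omega, pow_add, pow_mul,
      neg_one_sq, one_pow, mul_one]
  rw [s1, s2, hc]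
  have t1 : ((1 : A) ⊗ₜ[ℂ] (a ^ (n - 1))) * ((a ^ n) ⊗ₜ[ℂ] (1 : A)) =
      (a ^ n) ⊗ₜ[ℂ] (a ^ (n - 1)) := by
    rw [Algebra.TensorProduct.tmul_mul_tmul, one_mul, mul_one]
  have t2 : ((1 : A) ⊗ₜ[ℂ] (a ^ n)) * ((a ^ (n - 1)) ⊗ₜ[ℂ] (1 : A)) =
      (a ^ (n - 1)) ⊗ₜ[ℂ] (a ^ n) := by
    rw [Algebra.TensorProduct.tmul_mul_tmul, one_mul, mul_one]
  simp only [Algebra.smul_def, map_mul, map_pow, map_neg, map_one, map_natCast]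
  linear_combination ((-1 : A ⊗[ℂ] A) ^ n * ((2 * n - 1).choose n : A ⊗[ℂ] A)) * t1 +
    ((-1 : A ⊗[ℂ] A) ^ (n - 1) * ((2 * n - 1).choose n : A ⊗[ℂ] A)) * t2

open scoped TensorProduct in
/-- **Theorem.** In `R ⊗_ℂ R`, with `p = (-1)^{n-1} C(2n-1, n-1)` and
`q = (-1)^n C(2n-1, n)`, one has
`(1 ⊗ a₁ - a₁ ⊗ 1)^{2n-1} = p (a₁^{n-1} ⊗ a₁^n) + q (a₁^n ⊗ a₁^{n-1})`,
and likewise for `a₂`. -/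
theorem zero_divisor_pow_eq (n : ℕ) (hn : 1 ≤ n) :
    ((1 : CohRing n) ⊗ₜ[ℂ] a₁ n - a₁ n ⊗ₜ[ℂ] (1 : CohRing n)) ^ (2 * n - 1) =
      ((-1 : ℂ) ^ (n - 1) * (Nat.choose (2 * n - 1) (n - 1) : ℂ)) •
        ((a₁ n ^ (n - 1)) ⊗ₜ[ℂ] (a₁ n ^ n)) +
      ((-1 : ℂ) ^ n * (Nat.choose (2 * n - 1) n : ℂ)) •
        ((a₁ n ^ n) ⊗ₜ[ℂ] (a₁ n ^ (n - 1))) ∧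
    ((1 : CohRing n) ⊗ₜ[ℂ] a₂ n - a₂ n ⊗ₜ[ℂ] (1 : CohRing n)) ^ (2 * n - 1) =
      ((-1 : ℂ) ^ (n - 1) * (Nat.choose (2 * n - 1) (n - 1) : ℂ)) •
        ((a₂ n ^ (n - 1)) ⊗ₜ[ℂ] (a₂ n ^ n)) +
      ((-1 : ℂ) ^ n * (Nat.choose (2 * n - 1) n : ℂ)) •
        ((a₂ n ^ n) ⊗ₜ[ℂ] (a₂ n ^ (n - 1))) := by
  have h1 : a₁ n ^ (n + 1) = 0 := by
    rw [a₁, ← map_pow, Ideal.Quotient.eq_zero_iff_mem]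
    exact Ideal.subset_span (by simp)
  have h2 : a₂ n ^ (n + 1) = 0 := by
    rw [a₂, ← map_pow, Ideal.Quotient.eq_zero_iff_mem]
    exact Ideal.subset_span (by simp)
  exact ⟨key_tensor_pow n hn _ h1, key_tensor_pow n hn _ h2⟩
end

section
/- Let n ≥ 1, let R = ℂ[a₁, a₂] / ⟨r_n(a₁,a₂), a₁^{n+1}, a₂^{n+1}⟩ where r_n(x,y) = Σ_{i=0}^{n} x^{n−i}y^i, and work in R ⊗_ℂ R. With p = (−1)^{n−1} C(2n−1, n−1), the product (1 ⊗ a₁ − a₁ ⊗ 1)^{2n−1} · (1 ⊗ a₂ − a₂ ⊗ 1)^{2n−1} equals 2p² · (a₁^{n−1}a₂^{n}) ⊗ (a₁^{n−1}a₂^{n}), and this element is nonzero in R ⊗_ℂ R. -/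
set_option maxHeartbeats 1000000
set_option synthInstance.maxHeartbeats 400000


open scoped LinearAlgebra.Projectivization Simplicial

/-! ### Auxiliary: exponent bookkeeping on `Fin 2 →₀ ℕ` -/

open MvPolynomial Finset

noncomputable def dd (a b : ℕ) : Fin 2 →₀ ℕ := Finsupp.single 0 a + Finsupp.single 1 b

lemma dd_apply0 (a b : ℕ) : dd a b 0 = a := by simp [dd]
lemma dd_apply1 (a b : ℕ) : dd a b 1 = b := by simp [dd, Finsupp.single_apply]

lemma dd_le {a b c e : ℕ} : dd a b ≤ dd c e ↔ a ≤ c ∧ b ≤ e := by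
  rw [Finsupp.le_def, Fin.forall_fin_two, dd_apply0, dd_apply0, dd_apply1, dd_apply1]

lemma dd_sub (a b c e : ℕ) : dd c e - dd a b = dd (c - a) (e - b) := by
  ext i
  fin_cases i
  · simp [Finsupp.tsub_apply, dd_apply0]
  · simp [Finsupp.tsub_apply, dd_apply1]

lemma dd_inj {a b c e : ℕ} (h : dd a b = dd c e) : a = c ∧ b = e := by
  constructor
  · have := DFunLike.congr_fun h 0; simpa [dd_apply0] using this
  · have := DFunLike.congr_fun h 1; simpa [dd_apply1] using this

lemma X_pow_mul_X_pow (a b : ℕ) :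
    (X 0 ^ a * X 1 ^ b : MvPolynomial (Fin 2) ℂ) = monomial (dd a b) 1 := by
  rw [X_pow_eq_monomial, X_pow_eq_monomial, monomial_mul, one_mul, dd]

/-! ### The functional `lam` killing the ideal but not `x^{n-1} y^n` -/

noncomputable def lam (n : ℕ) : MvPolynomial (Fin 2) ℂ →ₗ[ℂ] ℂ :=
  lcoeff ℂ (dd (n - 1) n) - lcoeff ℂ (dd n (n - 1))

lemma lam_apply (n : ℕ) (f : MvPolynomial (Fin 2) ℂ) :
    lam n f = coeff (dd (n - 1) n) f - coeff (dd n (n - 1)) f := rfl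

lemma lam_mul_X0 (n : ℕ) (f : MvPolynomial (Fin 2) ℂ) :
    lam n (f * X 0 ^ (n + 1)) = 0 := by
  rw [lam_apply]
  rw [show (X 0 ^ (n+1) : MvPolynomial (Fin 2) ℂ) = monomial (dd (n+1) 0) 1 by
    simpa using X_pow_mul_X_pow (n+1) 0]
  rw [coeff_mul_monomial', coeff_mul_monomial']
  rw [if_neg, if_neg, sub_zero]
  · rw [dd_le]; omega
  · rw [dd_le]; omega

lemma lam_mul_X1 (n : ℕ) (f : MvPolynomial (Fin 2) ℂ) :
    lam n (f * X 1 ^ (n + 1)) = 0 := by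
  rw [lam_apply]
  rw [show (X 1 ^ (n+1) : MvPolynomial (Fin 2) ℂ) = monomial (dd 0 (n+1)) 1 by
    simpa using X_pow_mul_X_pow 0 (n+1)]
  rw [coeff_mul_monomial', coeff_mul_monomial']
  rw [if_neg, if_neg, sub_zero]
  · rw [dd_le]; omega
  · rw [dd_le]; omega

lemma lam_mul_r (n : ℕ) (hn : 1 ≤ n) (f : MvPolynomial (Fin 2) ℂ) :
    lam n (f * rPoly n) = 0 := by
  rw [lam_apply, rPoly]
  rw [Finset.mul_sum, coeff_sum, coeff_sum]
  simp_rw [X_pow_mul_X_pow, coeff_mul_monomial']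
  have h1 : ∑ i ∈ range (n+1),
      (if dd (n - i) i ≤ dd (n-1) n then coeff (dd (n-1) n - dd (n-i) i) f * 1 else 0)
      = ∑ i ∈ range n, coeff (dd i (n-1-i)) f := by
    rw [Finset.sum_range_succ']
    rw [if_neg (by rw [dd_le]; omega)]
    rw [add_zero]
    apply Finset.sum_congr rfl
    intro i hi
    rw [Finset.mem_range] at hi
    rw [if_pos (by rw [dd_le]; omega), dd_sub, mul_one]
    congr 2 <;> omega
  have h2 : ∑ i ∈ range (n+1),
      (if dd (n - i) i ≤ dd n (n-1) then coeff (dd n (n-1) - dd (n-i) i) f * 1 else 0)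
      = ∑ i ∈ range n, coeff (dd i (n-1-i)) f := by
    rw [Finset.sum_range_succ]
    rw [if_neg (by rw [dd_le]; omega)]
    rw [add_zero]
    apply Finset.sum_congr rfl
    intro i hi
    rw [Finset.mem_range] at hi
    rw [if_pos (by rw [dd_le]; omega), dd_sub, mul_one]
    congr 2 <;> omega
  rw [h1, h2, sub_self]

lemma lam_vanish (n : ℕ) (hn : 1 ≤ n) {f : MvPolynomial (Fin 2) ℂ}
    (hf : f ∈ confIdeal n) : lam n f = 0 := by
  rw [confIdeal, Ideal.mem_span_insert] at hf
  obtain ⟨a, z, hz, rfl⟩ := hf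
  rw [Ideal.mem_span_insert] at hz
  obtain ⟨b, w, hw, rfl⟩ := hz
  rw [Ideal.mem_span_singleton] at hw
  obtain ⟨c, rfl⟩ := hw
  rw [map_add, map_add, mul_comm (X 1 ^ (n+1)) c]
  rw [lam_mul_r n hn, lam_mul_X0, lam_mul_X1]
  ring

/-! ### Relations in the quotient ring -/

lemma a1_pow_zero (n : ℕ) : a₁ n ^ (n + 1) = 0 := by
  rw [a₁, ← map_pow, Ideal.Quotient.eq_zero_iff_mem, confIdeal]
  exact Ideal.subset_span (by simp)

lemma a2_pow_zero (n : ℕ) : a₂ n ^ (n + 1) = 0 := by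
  rw [a₂, ← map_pow, Ideal.Quotient.eq_zero_iff_mem, confIdeal]
  exact Ideal.subset_span (by simp)

lemma a1_pow_zero' (n k : ℕ) (h : n + 1 ≤ k) : a₁ n ^ k = 0 :=
  pow_eq_zero_of_le h (a1_pow_zero n)

lemma a2_pow_zero' (n k : ℕ) (h : n + 1 ≤ k) : a₂ n ^ k = 0 :=
  pow_eq_zero_of_le h (a2_pow_zero n)

lemma hr_sum (n : ℕ) : ∑ i ∈ range (n + 1), a₁ n ^ (n - i) * a₂ n ^ i = 0 := by
  have : Ideal.Quotient.mk (confIdeal n) (rPoly n) = 0 := by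
    rw [Ideal.Quotient.eq_zero_iff_mem, confIdeal]
    exact Ideal.subset_span (by simp)
  rw [rPoly, map_sum] at this
  simpa [a₁, a₂, map_mul, map_pow] using this

lemma rel_top (m : ℕ) : a₁ (m+1) ^ (m+1) * a₂ (m+1) ^ (m+1) = 0 := by
  have h := congrArg (· * a₂ (m+1) ^ (m+1)) (hr_sum (m+1))
  simp only [zero_mul, Finset.sum_mul] at h
  rw [Finset.sum_range_succ'] at h
  have hz : ∀ i ∈ range (m+1),
      a₁ (m+1) ^ (m+1 - (i+1)) * a₂ (m+1) ^ (i+1) * a₂ (m+1) ^ (m+1) = 0 := by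
    intro i _
    rw [mul_assoc, ← pow_add, a2_pow_zero' (m+1) _ (by omega), mul_zero]
  rw [Finset.sum_congr rfl hz, Finset.sum_const_zero, zero_add] at h
  simpa using h

lemma rel_side (m : ℕ) :
    a₁ (m+1) ^ (m+1) * a₂ (m+1) ^ m = -(a₁ (m+1) ^ m * a₂ (m+1) ^ (m+1)) := by
  have h := congrArg (· * a₂ (m+1) ^ m) (hr_sum (m+1))
  simp only [zero_mul, Finset.sum_mul] at h
  rw [Finset.sum_range_succ', Finset.sum_range_succ'] at h
  have hz : ∀ i ∈ range m,
      a₁ (m+1) ^ (m+1 - (i+1+1)) * a₂ (m+1) ^ (i+1+1) * a₂ (m+1) ^ m = 0 := by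
    intro i _
    rw [mul_assoc, ← pow_add, a2_pow_zero' (m+1) _ (by omega), mul_zero]
  rw [Finset.sum_congr rfl hz, Finset.sum_const_zero, zero_add] at h
  have e1 : m + 1 - (0+1) = m := by omega
  rw [e1] at h
  simp only [Nat.sub_zero, pow_zero, mul_one, pow_one] at h
  rw [mul_assoc, ← pow_add] at h
  have : a₁ (m+1) ^ m * a₂ (m+1) ^ (1+m) + a₁ (m+1) ^ (m+1) * a₂ (m+1) ^ m = 0 := h
  rw [show 1 + m = m + 1 by omega] at this
  linear_combination this

/-! ### The binomial expansion in the tensor square -/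

open scoped TensorProduct

lemma pow_expand {A : Type*} [CommRing A] [Algebra ℂ A] (m : ℕ) (x : A)
    (hx : x ^ (m + 2) = 0) :
    ((1 : A) ⊗ₜ[ℂ] x - x ⊗ₜ[ℂ] (1 : A)) ^ (2*m+1) =
      ((-1 : ℂ) ^ m * ((2*m+1).choose m : ℂ)) •
        ((x ^ m) ⊗ₜ[ℂ] (x ^ (m+1)) - (x ^ (m+1)) ⊗ₜ[ℂ] (x ^ m)) := by
  have hxk : ∀ k, m + 2 ≤ k → x ^ k = 0 := fun k hk => pow_eq_zero_of_le hk hx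
  rw [sub_eq_add_neg, add_comm, add_pow]
  have key : ∀ k ∈ Finset.range (2*m+1+1),
      (-(x ⊗ₜ[ℂ] (1:A))) ^ k * ((1:A) ⊗ₜ[ℂ] x) ^ (2*m+1-k) * (((2*m+1).choose k : ℕ) : A ⊗[ℂ] A)
      = ((-1 : ℂ) ^ k * ((2*m+1).choose k : ℂ)) • ((x ^ k) ⊗ₜ[ℂ] (x ^ (2*m+1-k))) := by
    intro k _
    calc (-(x ⊗ₜ[ℂ] (1:A))) ^ k * ((1:A) ⊗ₜ[ℂ] x) ^ (2*m+1-k) * (((2*m+1).choose k : ℕ) : A ⊗[ℂ] A)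
        = (-1 : A ⊗[ℂ] A) ^ k * (((2*m+1).choose k : ℕ) : A ⊗[ℂ] A) *
            (((x ^ k) ⊗ₜ[ℂ] (1:A)) * ((1:A) ⊗ₜ[ℂ] (x ^ (2*m+1-k)))) := by
          rw [neg_pow, Algebra.TensorProduct.tmul_pow, Algebra.TensorProduct.tmul_pow,
            one_pow, one_pow]
          ring
      _ = ((-1 : ℂ) ^ k * ((2*m+1).choose k : ℂ)) • ((x ^ k) ⊗ₜ[ℂ] (x ^ (2*m+1-k))) := by
          rw [Algebra.TensorProduct.tmul_mul_tmul, mul_one, one_mul, Algebra.smul_def,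
            map_mul, map_pow, map_neg, map_one, map_natCast]
  rw [Finset.sum_congr rfl key]
  have hsub : ({m, m+1} : Finset ℕ) ⊆ Finset.range (2*m+1+1) := by
    intro k hk
    simp only [Finset.mem_insert, Finset.mem_singleton] at hk
    rw [Finset.mem_range]; omega
  rw [← Finset.sum_subset hsub ?side]
  case side =>
    intro k hk hk'
    simp only [Finset.mem_insert, Finset.mem_singleton, not_or] at hk'
    rw [Finset.mem_range] at hk
    rcases le_or_gt (m+2) k with h | h
    · rw [hxk k h, TensorProduct.zero_tmul, smul_zero]
    · have : m + 2 ≤ 2*m+1-k := by omega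
      rw [hxk _ this, TensorProduct.tmul_zero, smul_zero]
  rw [Finset.sum_pair (by omega : m ≠ m+1)]
  have e1 : 2*m+1-m = m+1 := by omega
  have e2 : 2*m+1-(m+1) = m := by omega
  have hcs : (2*m+1).choose (m+1) = (2*m+1).choose m := by
    have h := Nat.choose_symm (show m+1 ≤ 2*m+1 by omega)
    rw [show 2*m+1-(m+1) = m by omega] at h
    exact h.symm
  rw [e1, e2, hcs, smul_sub]
  rw [show ((-1:ℂ)^(m+1) * ((2*m+1).choose m : ℂ)) = -((-1:ℂ)^m * ((2*m+1).choose m : ℂ)) by ring]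
  rw [neg_smul, ← sub_eq_add_neg]

open scoped TensorProduct in
/-- **Theorem.** In `R ⊗_ℂ R`, with `p = (-1)^{n-1} C(2n-1, n-1)`, the product
`(1 ⊗ a₁ - a₁ ⊗ 1)^{2n-1} (1 ⊗ a₂ - a₂ ⊗ 1)^{2n-1}` equals
`2p² (a₁^{n-1}a₂ⁿ) ⊗ (a₁^{n-1}a₂ⁿ)`, and this element is nonzero. -/
theorem zero_divisors_pow_mul_ne_zero (n : ℕ) (hn : 1 ≤ n) :
    ((1 : CohRing n) ⊗ₜ[ℂ] a₁ n - a₁ n ⊗ₜ[ℂ] (1 : CohRing n)) ^ (2 * n - 1) *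
        ((1 : CohRing n) ⊗ₜ[ℂ] a₂ n - a₂ n ⊗ₜ[ℂ] (1 : CohRing n)) ^ (2 * n - 1) =
      (2 * ((-1 : ℂ) ^ (n - 1) * (Nat.choose (2 * n - 1) (n - 1) : ℂ)) ^ 2) •
        ((a₁ n ^ (n - 1) * a₂ n ^ n) ⊗ₜ[ℂ] (a₁ n ^ (n - 1) * a₂ n ^ n)) ∧
    ((1 : CohRing n) ⊗ₜ[ℂ] a₁ n - a₁ n ⊗ₜ[ℂ] (1 : CohRing n)) ^ (2 * n - 1) *
        ((1 : CohRing n) ⊗ₜ[ℂ] a₂ n - a₂ n ⊗ₜ[ℂ] (1 : CohRing n)) ^ (2 * n - 1) ≠ 0 := by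
  obtain ⟨m, rfl⟩ : ∃ m, n = m + 1 := ⟨n - 1, by omega⟩
  have e1 : 2 * (m+1) - 1 = 2*m+1 := by omega
  have e2 : m + 1 - 1 = m := by omega
  rw [e1, e2]
  set c : ℂ := (-1 : ℂ) ^ m * ((2*m+1).choose m : ℂ) with hc
  set t : CohRing (m+1) := a₁ (m+1) ^ m * a₂ (m+1) ^ (m+1) with ht
  -- the two power expansions
  have hu := pow_expand m (a₁ (m+1)) (a1_pow_zero (m+1))
  have hv := pow_expand m (a₂ (m+1)) (a2_pow_zero (m+1))
  -- the product
  have hprod :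
      ((1 : CohRing (m+1)) ⊗ₜ[ℂ] a₁ (m+1) - a₁ (m+1) ⊗ₜ[ℂ] 1) ^ (2*m+1) *
        ((1 : CohRing (m+1)) ⊗ₜ[ℂ] a₂ (m+1) - a₂ (m+1) ⊗ₜ[ℂ] 1) ^ (2*m+1) =
      (2 * c ^ 2) • (t ⊗ₜ[ℂ] t) := by
    have hw : ((a₁ (m+1) ^ m) ⊗ₜ[ℂ] (a₁ (m+1) ^ (m+1)) - (a₁ (m+1) ^ (m+1)) ⊗ₜ[ℂ] (a₁ (m+1) ^ m)) *
        ((a₂ (m+1) ^ m) ⊗ₜ[ℂ] (a₂ (m+1) ^ (m+1)) - (a₂ (m+1) ^ (m+1)) ⊗ₜ[ℂ] (a₂ (m+1) ^ m))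
        = (2:ℂ) • (t ⊗ₜ[ℂ] t) := by
      have expand : ∀ A B C D : CohRing (m+1) ⊗[ℂ] CohRing (m+1),
          (A - B) * (C - D) = A*C - A*D - B*C + B*D := fun A B C D => by ring
      rw [expand]
      rw [Algebra.TensorProduct.tmul_mul_tmul, Algebra.TensorProduct.tmul_mul_tmul,
        Algebra.TensorProduct.tmul_mul_tmul, Algebra.TensorProduct.tmul_mul_tmul]
      rw [rel_top m, TensorProduct.tmul_zero, TensorProduct.zero_tmul]
      rw [rel_side m, TensorProduct.tmul_neg, TensorProduct.neg_tmul]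
      rw [← ht, two_smul]
      abel
    rw [hu, hv, smul_mul_assoc, mul_smul_comm, smul_smul, hw, smul_smul]
    congr 1
    ring
  refine ⟨hprod, ?_⟩
  rw [hprod]
  -- nonvanishing
  have hc0 : (2 * c ^ 2 : ℂ) ≠ 0 := by
    have : c ≠ 0 := by
      apply mul_ne_zero
      · exact pow_ne_zero _ (by norm_num)
      · exact_mod_cast (Nat.choose_pos (by omega : m ≤ 2*m+1)).ne'
    exact mul_ne_zero two_ne_zero (pow_ne_zero 2 this)
  have htne : t ≠ 0 := by
    intro h0
    have hmem : (X 0 ^ m * X 1 ^ (m+1) : MvPolynomial (Fin 2) ℂ) ∈ confIdeal (m+1) := by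
      rw [← Ideal.Quotient.eq_zero_iff_mem]
      have : Ideal.Quotient.mk (confIdeal (m+1)) (X 0 ^ m * X 1 ^ (m+1))
          = a₁ (m+1) ^ m * a₂ (m+1) ^ (m+1) := by
        rw [map_mul, map_pow, map_pow, a₁, a₂]
      rw [this, ← ht, h0]
    have := lam_vanish (m+1) (by omega) hmem
    rw [lam_apply, X_pow_mul_X_pow, e2, coeff_monomial, coeff_monomial] at this
    rw [if_pos rfl, if_neg (fun h => by have := dd_inj h; omega)] at this
    norm_num at this
  obtain ⟨φ, hφ⟩ : ∃ φ : Module.Dual ℂ (CohRing (m+1)), φ t ≠ 0 := by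
    by_contra h
    push_neg at h
    exact htne ((Module.forall_dual_apply_eq_zero_iff ℂ t).mp h)
  intro hE
  have := congrArg (TensorProduct.lift ((LinearMap.mul ℂ ℂ).compl₁₂ φ φ)) hE
  rw [map_smul, map_zero, TensorProduct.lift.tmul] at this
  simp only [LinearMap.compl₁₂_apply, LinearMap.mul_apply'] at this
  rw [smul_eq_mul] at this
  exact hc0 (by
    have hφ2 : φ t * φ t ≠ 0 := mul_ne_zero hφ hφ
    exact (mul_eq_zero.mp this).resolve_right hφ2)
end
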